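/- Let ρ ∈ (0,1) and let S ∈ ℝ^{m×n} be any matrix such that ‖C_S − I_d‖₂ ≤ √ρ. Set μ_ρ = 2(1−ρ)/(1+√(1−ρ)) and β_ρ = (1−√(1−ρ))/(1+√(1−ρ)). Let (x_t)_{t≥0} satisfy the heavy-ball (Polyak-IHS) recursion x_{t+1} = x_t − μ_ρ · H_S⁻¹∇f(x_t) + β_ρ · (x_t − x_{t−1}) for t ≥ 1, with δ_{x_1} + δ_{x_0} > 0. Then for every t ≥ 1, (δ_{x_{t+1}} + δ_{x_t})/(δ_{x_1} + δ_{x_0}) ≤ α(t,ρ) · β_ρ^{ω(t)}, where ν(t) = log(t)/log(2) + 1, ω(t) = t − 2ν(t), and α(t,ρ) = 3^{ν(t)(ν(t)+1)} · (1 + 4β_ρ + β_ρ²)^{2ν(t)}. -/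

import Mathlib

open Matrix MeasureTheory ProbabilityTheory Real Polynomial
open scoped Classical

noncomputable section

/-- Spectral (operator) norm of a real matrix, via its action on Euclidean space. -/
def matSpectralNorm {k l : ℕ} (M : Matrix (Fin k) (Fin l) ℝ) : ℝ :=
  ‖LinearMap.toContinuousLinearMap (Matrix.toEuclideanLin M)‖

/-- Positive semidefinite square root of a matrix (junk value `0` if `M` is not
positive semidefinite). -/
def msqrt {d : ℕ} (M : Matrix (Fin d) (Fin d) ℝ) : Matrix (Fin d) (Fin d) ℝ :=
  if h : M.PosSemidef then
    h.1.eigenvectorUnitary.1 * diagonal (Real.sqrt ∘ h.1.eigenvalues) *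
      (star h.1.eigenvectorUnitary : Matrix (Fin d) (Fin d) ℝ)
  else 0

/-- The Hessian `H = Aᵀ A + ν² Λ`. -/
def Hmat {n d : ℕ} (A : Matrix (Fin n) (Fin d) ℝ) (ν : ℝ)
    (Λ : Matrix (Fin d) (Fin d) ℝ) : Matrix (Fin d) (Fin d) ℝ :=
  Aᵀ * A + ν ^ 2 • Λ

/-- The sketched Hessian `H_S = Aᵀ Sᵀ S A + ν² Λ`. -/
def HSmat {n d m : ℕ} (A : Matrix (Fin n) (Fin d) ℝ) (ν : ℝ)
    (Λ : Matrix (Fin d) (Fin d) ℝ) (S : Matrix (Fin m) (Fin n) ℝ) :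
    Matrix (Fin d) (Fin d) ℝ :=
  Aᵀ * Sᵀ * S * A + ν ^ 2 • Λ

/-- `C_S = H^{-1/2} H_S H^{-1/2}`. -/
def CSmat {n d m : ℕ} (A : Matrix (Fin n) (Fin d) ℝ) (ν : ℝ)
    (Λ : Matrix (Fin d) (Fin d) ℝ) (S : Matrix (Fin m) (Fin n) ℝ) :
    Matrix (Fin d) (Fin d) ℝ :=
  (msqrt (Hmat A ν Λ))⁻¹ * HSmat A ν Λ S * (msqrt (Hmat A ν Λ))⁻¹

/-- The minimizer `x* = H⁻¹ b`. -/
def xstar {n d : ℕ} (A : Matrix (Fin n) (Fin d) ℝ) (ν : ℝ)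
    (Λ : Matrix (Fin d) (Fin d) ℝ) (b : Fin d → ℝ) : Fin d → ℝ :=
  (Hmat A ν Λ)⁻¹.mulVec b

/-- The gradient `∇f(x) = H x - b`. -/
def gradf {n d : ℕ} (A : Matrix (Fin n) (Fin d) ℝ) (ν : ℝ)
    (Λ : Matrix (Fin d) (Fin d) ℝ) (b : Fin d → ℝ) (x : Fin d → ℝ) : Fin d → ℝ :=
  (Hmat A ν Λ).mulVec x - b

/-- The exact error `δ_x = (1/2)(x - x*)ᵀ H (x - x*)`. -/
def deltaEx {n d : ℕ} (A : Matrix (Fin n) (Fin d) ℝ) (ν : ℝ)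
    (Λ : Matrix (Fin d) (Fin d) ℝ) (b : Fin d → ℝ) (x : Fin d → ℝ) : ℝ :=
  (1 / 2) * ((x - xstar A ν Λ b) ⬝ᵥ (Hmat A ν Λ).mulVec (x - xstar A ν Λ b))

/-- The approximate Newton decrement `δ̃_x = (1/2) ∇f(x)ᵀ H_S⁻¹ ∇f(x)`. -/
def deltaApx {n d m : ℕ} (A : Matrix (Fin n) (Fin d) ℝ) (ν : ℝ)
    (Λ : Matrix (Fin d) (Fin d) ℝ) (b : Fin d → ℝ)
    (S : Matrix (Fin m) (Fin n) ℝ) (x : Fin d → ℝ) : ℝ :=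
  (1 / 2) * (gradf A ν Λ b x ⬝ᵥ (HSmat A ν Λ S)⁻¹.mulVec (gradf A ν Λ b x))

/-!
In the coordinates `y = H^{1/2} (x - x*)`, in which `δ_x = ‖y‖² / 2`, the heavy-ball iteration is
the three-term recurrence `y_{t+1} = M y_t - β y_{t-1}` with the symmetric matrix
`M = (1 + β) I - μ H^{1/2} H_S⁻¹ H^{1/2}`. The eigenvalues of `H^{1/2} H_S⁻¹ H^{1/2}` are the
inverses of those of `C_S`, which lie in `[1 - √ρ, 1 + √ρ]`; for the tuned `μ_ρ, β_ρ` this places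
every eigenvalue `a` of `M` in `[-2√β, 2√β]`. Along an eigenvector the recurrence is scalar,
`c_{k+2} = a c_{k+1} - β c_k`, and it conserves up to the factor `β^k` the quadratic form
`c_{k+1}² - a c_{k+1} c_k + β c_k²`, which dominates `(|c_{k+1}| - √β |c_k|)²` because
`|a| ≤ 2√β`. Hence `|c_k| = O(k β^{k/2})` and `δ_{t+1} + δ_t ≤ 4 (t + 2)² β^{t-1} (δ_1 + δ_0)`,
which is smaller than the stated `α(t, ρ) β^{ω(t)}`.
-/

section LinearRecurrence

variable {a q : ℝ} {c : ℕ → ℝ}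

theorem recurrence_quadForm_eq (hc : ∀ k, c (k + 2) = a * c (k + 1) - q ^ 2 * c k) (k : ℕ) :
    c (k + 1) ^ 2 - a * c (k + 1) * c k + q ^ 2 * c k ^ 2
      = (q ^ 2) ^ k * (c 1 ^ 2 - a * c 1 * c 0 + q ^ 2 * c 0 ^ 2) := by
  induction k with
  | zero => ring
  | succ k ih => rw [hc, pow_succ]; linear_combination q ^ 2 * ih

theorem abs_succ_le_of_recurrence (hq : 0 ≤ q) (ha : |a| ≤ 2 * q)
    (hc : ∀ k, c (k + 2) = a * c (k + 1) - q ^ 2 * c k) (k : ℕ) :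
    |c (k + 1)| ≤ q * |c k| + q ^ k * (|c 1| + q * |c 0|) := by
  have hcross : ∀ x y : ℝ, |a * x * y| ≤ 2 * q * (|x| * |y|) := fun x y => by
    rw [abs_mul, abs_mul, mul_assoc]
    exact mul_le_mul_of_nonneg_right ha (by positivity)
  have hlower : (|c (k + 1)| - q * |c k|) ^ 2
      ≤ c (k + 1) ^ 2 - a * c (k + 1) * c k + q ^ 2 * c k ^ 2 := by
    nlinarith [le_abs_self (a * c (k + 1) * c k), hcross (c (k + 1)) (c k),
      sq_abs (c (k + 1)), sq_abs (c k)]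
  have hupper : c 1 ^ 2 - a * c 1 * c 0 + q ^ 2 * c 0 ^ 2 ≤ (|c 1| + q * |c 0|) ^ 2 := by
    nlinarith [neg_abs_le (a * c 1 * c 0), hcross (c 1) (c 0), sq_abs (c 1), sq_abs (c 0)]
  have hsq : (|c (k + 1)| - q * |c k|) ^ 2 ≤ (q ^ k * (|c 1| + q * |c 0|)) ^ 2 := by
    rw [recurrence_quadForm_eq hc] at hlower
    rw [mul_pow, ← pow_mul, mul_comm k, pow_mul]
    exact hlower.trans (mul_le_mul_of_nonneg_left hupper (by positivity))
  linarith [(abs_le_of_sq_le_sq' hsq (by positivity)).2]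

theorem abs_le_of_recurrence (hq : 0 ≤ q) (ha : |a| ≤ 2 * q)
    (hc : ∀ k, c (k + 2) = a * c (k + 1) - q ^ 2 * c k) (k : ℕ) :
    |c (k + 1)| ≤ q ^ (k + 1) * |c 0| + (k + 1) * q ^ k * (|c 1| + q * |c 0|) := by
  induction k with
  | zero =>
    have := mul_nonneg hq (abs_nonneg (c 0))
    simp only [zero_add, pow_one, pow_zero, CharP.cast_eq_zero, one_mul]
    linarith
  | succ k ih =>
    have hstep := abs_succ_le_of_recurrence hq ha hc (k + 1)
    have := mul_le_mul_of_nonneg_left ih hq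
    push_cast
    linear_combination hstep + this

theorem abs_le_of_recurrence_of_le_one (hq0 : 0 ≤ q) (hq1 : q ≤ 1) (ha : |a| ≤ 2 * q)
    (hc : ∀ k, c (k + 2) = a * c (k + 1) - q ^ 2 * c k) (k : ℕ) :
    |c (k + 1)| ≤ ((k : ℝ) + 2) * q ^ k * (|c 1| + |c 0|) :=
  calc |c (k + 1)| ≤ q ^ (k + 1) * |c 0| + (k + 1) * q ^ k * (|c 1| + q * |c 0|) :=
        abs_le_of_recurrence hq0 ha hc k
    _ ≤ q ^ k * |c 0| + (k + 1) * q ^ k * (|c 1| + 1 * |c 0|) := by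
        have hqk := pow_le_pow_of_le_one hq0 hq1 k.le_succ
        gcongr ?_ * _ + _ * (_ + ?_ * _)
    _ ≤ ((k : ℝ) + 2) * q ^ k * (|c 1| + |c 0|) := by
        have := mul_nonneg (pow_nonneg hq0 k) (abs_nonneg (c 1))
        nlinarith

theorem sq_add_sq_le_of_recurrence (hq0 : 0 ≤ q) (hq1 : q ≤ 1) (ha : |a| ≤ 2 * q)
    (hc : ∀ k, c (k + 2) = a * c (k + 1) - q ^ 2 * c k) {t : ℕ} (ht : 1 ≤ t) :
    c (t + 1) ^ 2 + c t ^ 2 ≤ 4 * ((t : ℝ) + 2) ^ 2 * (q ^ 2) ^ (t - 1) * (c 1 ^ 2 + c 0 ^ 2) := by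
  obtain ⟨s, rfl⟩ := Nat.exists_eq_add_of_le' ht
  have hnext : |c (s + 2)| ≤ ((s : ℝ) + 3) * q ^ s * (|c 1| + |c 0|) := by
    have hqs := pow_le_pow_of_le_one hq0 hq1 s.le_succ
    calc |c (s + 2)| ≤ ((s + 1 : ℕ) + 2) * q ^ (s + 1) * (|c 1| + |c 0|) :=
          abs_le_of_recurrence_of_le_one hq0 hq1 ha hc (s + 1)
      _ = ((s : ℝ) + 3) * q ^ (s + 1) * (|c 1| + |c 0|) := by push_cast; ring
      _ ≤ ((s : ℝ) + 3) * q ^ s * (|c 1| + |c 0|) := by gcongr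
  have hcur : |c (s + 1)| ≤ ((s : ℝ) + 3) * q ^ s * (|c 1| + |c 0|) := by
    refine (abs_le_of_recurrence_of_le_one hq0 hq1 ha hc s).trans ?_
    gcongr
    norm_num
  have hB : (((s : ℝ) + 3) * q ^ s * (|c 1| + |c 0|)) ^ 2
      ≤ 2 * ((s : ℝ) + 3) ^ 2 * (q ^ 2) ^ s * (c 1 ^ 2 + c 0 ^ 2) := by
    have : (|c 1| + |c 0|) ^ 2 ≤ 2 * (c 1 ^ 2 + c 0 ^ 2) := by
      nlinarith [sq_abs (c 1), sq_abs (c 0), sq_nonneg (|c 1| - |c 0|)]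
    calc (((s : ℝ) + 3) * q ^ s * (|c 1| + |c 0|)) ^ 2
        = ((s : ℝ) + 3) ^ 2 * (q ^ 2) ^ s * (|c 1| + |c 0|) ^ 2 := by ring
      _ ≤ ((s : ℝ) + 3) ^ 2 * (q ^ 2) ^ s * (2 * (c 1 ^ 2 + c 0 ^ 2)) := by gcongr
      _ = _ := by ring
  have h1 := sq_le_sq' (abs_le.1 hnext).1 (abs_le.1 hnext).2
  have h2 := sq_le_sq' (abs_le.1 hcur).1 (abs_le.1 hcur).2
  simp only [Nat.add_sub_cancel, Nat.cast_add, Nat.cast_one]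
  linear_combination h1 + h2 + 2 * hB

end LinearRecurrence

open scoped RealInnerProductSpace in
theorem norm_sq_add_norm_sq_le_of_recurrence {E : Type*} [NormedAddCommGroup E]
    [InnerProductSpace ℝ E] [FiniteDimensional ℝ E] {T : E →ₗ[ℝ] E} (hT : T.IsSymmetric)
    {q : ℝ} (hq0 : 0 ≤ q) (hq1 : q ≤ 1)
    (heig : ∀ μ, Module.End.HasEigenvalue T μ → |μ| ≤ 2 * q)
    {e : ℕ → E} (he : ∀ k, e (k + 2) = T (e (k + 1)) - q ^ 2 • e k) {t : ℕ} (ht : 1 ≤ t) :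
    ‖e (t + 1)‖ ^ 2 + ‖e t‖ ^ 2
      ≤ 4 * ((t : ℝ) + 2) ^ 2 * (q ^ 2) ^ (t - 1) * (‖e 1‖ ^ 2 + ‖e 0‖ ^ 2) := by
  let b := hT.eigenvectorBasis rfl
  let μ := hT.eigenvalues rfl
  have hcoord : ∀ i k, ⟪b i, e (k + 2)⟫ = μ i * ⟪b i, e (k + 1)⟫ - q ^ 2 * ⟪b i, e k⟫ := by
    intro i k
    rw [he, inner_sub_right, real_inner_smul_right, ← hT, hT.apply_eigenvectorBasis,
      real_inner_smul_left]
    rfl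
  simp only [← b.sum_sq_inner_right, ← Finset.sum_add_distrib, Finset.mul_sum]
  exact Finset.sum_le_sum fun i _ => sq_add_sq_le_of_recurrence (c := fun k => ⟪b i, e k⟫)
    hq0 hq1 (heig _ (hT.hasEigenvalue_eigenvalues rfl i)) (hcoord i) ht

theorem msqrt_eq_cfc {d : ℕ} {M : Matrix (Fin d) (Fin d) ℝ} (hM : M.PosSemidef) :
    msqrt M = cfc Real.sqrt M := by
  rw [msqrt, dif_pos hM, hM.1.cfc_eq, IsHermitian.cfc, Unitary.conjStarAlgAut_apply]
  rfl

theorem msqrt_mul_self {d : ℕ} {M : Matrix (Fin d) (Fin d) ℝ} (hM : M.PosSemidef) :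
    msqrt M * msqrt M = M := by
  have hspec : ∀ x ∈ spectrum ℝ M, 0 ≤ x := by
    intro x hx
    rw [hM.1.spectrum_real_eq_range_eigenvalues] at hx
    obtain ⟨i, rfl⟩ := hx
    exact hM.eigenvalues_nonneg i
  rw [msqrt_eq_cfc hM, ← cfc_mul .., cfc_congr fun x hx => Real.mul_self_sqrt (hspec x hx),
    cfc_id' ℝ M hM.1.isSelfAdjoint]

theorem msqrt_isHermitian {d : ℕ} {M : Matrix (Fin d) (Fin d) ℝ} (hM : M.PosSemidef) :
    (msqrt M).IsHermitian := by
  rw [msqrt_eq_cfc hM]; exact cfc_predicate _ _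

theorem posDef_of_posSemidef_sub_one {ι : Type*} [Fintype ι] [DecidableEq ι]
    {M : Matrix ι ι ℝ} (hM : (M - 1).PosSemidef) : M.PosDef := by
  simpa using PosDef.posSemidef_add hM PosDef.one

theorem Hmat_posDef {n d : ℕ} (A : Matrix (Fin n) (Fin d) ℝ) {ν : ℝ} (hν : 0 < ν)
    {Λ : Matrix (Fin d) (Fin d) ℝ} (hΛ : Λ.PosDef) : (Hmat A ν Λ).PosDef :=
  PosDef.posSemidef_add (posSemidef_conjTranspose_mul_self A) (hΛ.smul (pow_pos hν 2))

theorem HSmat_eq_Hmat {n d m : ℕ} (A : Matrix (Fin n) (Fin d) ℝ) (ν : ℝ)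
    (Λ : Matrix (Fin d) (Fin d) ℝ) (S : Matrix (Fin m) (Fin n) ℝ) :
    HSmat A ν Λ S = Hmat (S * A) ν Λ := by
  simp only [HSmat, Hmat, transpose_mul, Matrix.mul_assoc]

theorem abs_le_matSpectralNorm_of_mulVec_eq_smul {k : ℕ} {M : Matrix (Fin k) (Fin k) ℝ}
    {w : Fin k → ℝ} (hw : w ≠ 0) {μ : ℝ} (hMw : M *ᵥ w = μ • w) : |μ| ≤ matSpectralNorm M := by
  have hv : WithLp.toLp 2 w ≠ 0 := by simpa using hw
  have h := (LinearMap.toContinuousLinearMap (toEuclideanLin M)).le_opNorm (WithLp.toLp 2 w)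
  rw [LinearMap.coe_toContinuousLinearMap', toLpLin_toLp, toLin'_apply, hMw, WithLp.toLp_smul,
    norm_smul, Real.norm_eq_abs] at h
  exact le_of_mul_le_mul_right h (norm_pos_iff.2 hv)

-- With `r = √ρ` and `s = √(1 - ρ)`, the step is `μ_ρ = 2 s² / (1 + s)`, the momentum is
-- `β_ρ = (1 - s) / (1 + s)`, and `√β_ρ = r / (1 + s)`.
theorem abs_heavyBall_eigenvalue_le {r s l : ℝ} (hr : r < 1) (hs : 0 ≤ s)
    (hrs : r ^ 2 + s ^ 2 = 1) (hl : |l - 1| ≤ r) :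
    |1 + (1 - s) / (1 + s) - 2 * s ^ 2 / (1 + s) * l⁻¹| ≤ 2 * r / (1 + s) := by
  obtain ⟨hl₁, hl₂⟩ := abs_le.1 hl
  have hl0 : 0 < l := by linarith
  have hr0 : 0 ≤ r := (abs_nonneg _).trans hl
  have hfactor : 1 + (1 - s) / (1 + s) - 2 * s ^ 2 / (1 + s) * l⁻¹
      = 2 * (l - s ^ 2) / ((1 + s) * l) := by
    field_simp
    ring
  rw [hfactor, abs_div, abs_mul, abs_two, abs_of_pos (by positivity : 0 < (1 + s) * l),
    div_le_div_iff₀ (by positivity) (by positivity)]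
  -- `s ^ 2 = (1 - r) (1 + r)` while `1 - r ≤ l ≤ 1 + r`
  have : |l - s ^ 2| ≤ r * l := abs_le.2 ⟨by nlinarith, by nlinarith⟩
  nlinarith

theorem mulVec_eq_inv_smul_of_mul_eq_one {ι K : Type*} [Fintype ι] [DecidableEq ι] [Field K]
    {C N : Matrix ι ι K} (hCN : C * N = 1) {w : ι → K} {c : K} (hNw : N *ᵥ w = c • w) :
    C *ᵥ w = c⁻¹ • w := by
  have hw : w = c • C *ᵥ w := by
    rw [← mulVec_smul, ← hNw, mulVec_mulVec, hCN, one_mulVec]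
  rcases eq_or_ne c 0 with rfl | hc
  · rw [zero_smul] at hw
    rw [hw, mulVec_zero, smul_zero]
  · rw [hw, smul_smul, inv_mul_cancel₀ hc, one_smul, ← hw]

theorem abs_le_of_heavyBall_mulVec_eq_smul {k : ℕ} {C N : Matrix (Fin k) (Fin k) ℝ}
    (hCN : C * N = 1) {r s : ℝ} (hr : r < 1) (hs : 0 ≤ s) (hrs : r ^ 2 + s ^ 2 = 1)
    (hC : matSpectralNorm (C - 1) ≤ r) {w : Fin k → ℝ} (hw : w ≠ 0) {μ : ℝ}
    (hMw : ((1 + (1 - s) / (1 + s)) • (1 : Matrix (Fin k) (Fin k) ℝ)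
      - (2 * s ^ 2 / (1 + s)) • N) *ᵥ w = μ • w) :
    |μ| ≤ 2 * r / (1 + s) := by
  set a := 1 + (1 - s) / (1 + s)
  set step := 2 * s ^ 2 / (1 + s)
  have hr0 : 0 ≤ r := (norm_nonneg _).trans hC
  have hstep : step ≠ 0 := by
    have : 0 < s := by nlinarith
    positivity
  have hNw : N *ᵥ w = ((a - μ) / step) • w := by
    rw [sub_mulVec, smul_mulVec, smul_mulVec, one_mulVec] at hMw
    have h : step • N *ᵥ w = (a - μ) • w := by rw [sub_smul, ← hMw]; module
    rw [div_eq_inv_mul, mul_smul, ← h, smul_smul, inv_mul_cancel₀ hstep, one_smul]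
  have hCw := mulVec_eq_inv_smul_of_mul_eq_one hCN hNw
  have hl : |((a - μ) / step)⁻¹ - 1| ≤ r := by
    refine (abs_le_matSpectralNorm_of_mulVec_eq_smul hw ?_).trans hC
    rw [sub_mulVec, hCw, one_mulVec, sub_smul, one_smul]
  have hμ : μ = a - step * ((a - μ) / step)⁻¹⁻¹ := by
    rw [inv_inv, mul_div_cancel₀ _ hstep]
    ring
  rw [hμ]
  exact abs_heavyBall_eigenvalue_le hr hs hrs hl

theorem mulVec_sub_of_heavyBall {ι R : Type*} [Fintype ι] [DecidableEq ι] [CommRing R]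
    {H P Q : Matrix ι ι R} (hQ : Q * Q = H) {xs b : ι → R} (hxs : H *ᵥ xs = b) {step β : R}
    {x₀ x₁ x₂ : ι → R} (h : x₂ = x₁ - step • P *ᵥ (H *ᵥ x₁ - b) + β • (x₁ - x₀)) :
    Q *ᵥ (x₂ - xs) = ((1 + β) • (1 : Matrix ι ι R) - step • (Q * P * Q))
      *ᵥ (Q *ᵥ (x₁ - xs)) - β • Q *ᵥ (x₀ - xs) := by
  subst h hQ hxs
  simp only [sub_mulVec, smul_mulVec, one_mulVec, ← mulVec_mulVec, mulVec_sub, mulVec_add,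
    mulVec_smul]
  module

theorem dotProduct_mul_self_mulVec {ι : Type*} [Fintype ι] {Q : Matrix ι ι ℝ}
    (hQ : Q.IsHermitian) (v : ι → ℝ) : v ⬝ᵥ (Q * Q) *ᵥ v = ‖WithLp.toLp 2 (Q *ᵥ v)‖ ^ 2 := by
  rw [← real_inner_self_eq_norm_sq, EuclideanSpace.inner_toLp_toLp, star_trivial,
    ← mulVec_mulVec, dotProduct_mulVec, ← vecMul_transpose,
    ← conjTranspose_eq_transpose_of_trivial, hQ.eq, dotProduct_comm]

theorem norm_sq_add_norm_sq_le_of_heavyBall {k : ℕ} {C N : Matrix (Fin k) (Fin k) ℝ}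
    (hCN : C * N = 1) (hN : N.IsHermitian) {r s : ℝ} (hr : r < 1) (hs : 0 ≤ s)
    (hrs : r ^ 2 + s ^ 2 = 1) (hC : matSpectralNorm (C - 1) ≤ r) {y : ℕ → Fin k → ℝ}
    (hy : ∀ j, y (j + 2) = ((1 + (1 - s) / (1 + s)) • (1 : Matrix (Fin k) (Fin k) ℝ)
      - (2 * s ^ 2 / (1 + s)) • N) *ᵥ y (j + 1) - ((1 - s) / (1 + s)) • y j)
    {t : ℕ} (ht : 1 ≤ t) :
    ‖WithLp.toLp 2 (y (t + 1))‖ ^ 2 + ‖WithLp.toLp 2 (y t)‖ ^ 2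
      ≤ 4 * ((t : ℝ) + 2) ^ 2 * ((1 - s) / (1 + s)) ^ (t - 1)
        * (‖WithLp.toLp 2 (y 1)‖ ^ 2 + ‖WithLp.toLp 2 (y 0)‖ ^ 2) := by
  have hr0 : 0 ≤ r := (norm_nonneg _).trans hC
  have hq : (r / (1 + s)) ^ 2 = (1 - s) / (1 + s) := by
    field_simp
    linear_combination hrs
  have hM : ((1 + (1 - s) / (1 + s)) • (1 : Matrix (Fin k) (Fin k) ℝ)
      - (2 * s ^ 2 / (1 + s)) • N).IsHermitian :=
    (isHermitian_one.smul (IsSelfAdjoint.all _)).sub (hN.smul (IsSelfAdjoint.all _))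
  rw [← hq]
  refine norm_sq_add_norm_sq_le_of_recurrence (e := fun j => WithLp.toLp 2 (y j))
    (isSymmetric_toEuclideanLin_iff.2 hM)
    (by positivity) ((div_le_one (by positivity)).2 (by linarith)) (fun μ hμ => ?_)
    (fun j => ?_) ht
  · obtain ⟨v, hv⟩ := hμ.exists_hasEigenvector
    have hbound := abs_le_of_heavyBall_mulVec_eq_smul hCN hr hs hrs hC
      (w := WithLp.ofLp v) (by simpa using hv.2) (congrArg WithLp.ofLp hv.apply_eq_smul)
    rwa [mul_div_assoc] at hbound
  · rw [hy, hq]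
    rfl

theorem mul_sq_mul_pow_le_rate {β L : ℝ} (hβ0 : 0 < β) (hβ1 : β < 1) (hL : 1 ≤ L) {t : ℕ}
    (ht : 1 ≤ t) (htL : (t : ℝ) ≤ 2 ^ (L - 1)) :
    4 * ((t : ℝ) + 2) ^ 2 * β ^ (t - 1)
      ≤ 3 ^ (L * (L + 1)) * (1 + 4 * β + β ^ 2) ^ (2 * L) * β ^ ((t : ℝ) - 2 * L) := by
  have ht1 : (1 : ℝ) ≤ t := by exact_mod_cast ht
  have hpoly : 9 * (t : ℝ) ^ 2 ≤ 3 ^ (L * (L + 1)) :=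
    calc 9 * (t : ℝ) ^ 2 ≤ 9 * (3 ^ (L - 1)) ^ 2 := by
          gcongr
          exact htL.trans (Real.rpow_le_rpow (by norm_num) (by norm_num) (by linarith))
      _ = 3 ^ (2 * L) := by
          rw [sq, show (9 : ℝ) = 3 ^ (2 : ℝ) by rw [Real.rpow_two]; norm_num,
            ← Real.rpow_add (by norm_num), ← Real.rpow_add (by norm_num)]
          ring_nf
      _ ≤ 3 ^ (L * (L + 1)) := Real.rpow_le_rpow_of_exponent_le (by norm_num) (by nlinarith)
  have hmomentum : 16 * β ≤ (1 + 4 * β + β ^ 2) ^ (2 * L) :=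
    calc 16 * β ≤ (1 + 4 * β + β ^ 2) ^ (2 : ℝ) := by
          rw [Real.rpow_two]
          nlinarith [sq_nonneg (1 - 4 * β)]
      _ ≤ (1 + 4 * β + β ^ 2) ^ (2 * L) :=
          Real.rpow_le_rpow_of_exponent_le (by nlinarith) (by linarith)
  have hpow : β ^ (t - 1) ≤ β * β ^ ((t : ℝ) - 2 * L) :=
    calc β ^ (t - 1) = β ^ ((t : ℝ) - 2 * L) * β ^ (2 * L - 1) := by
          rw [← Real.rpow_add hβ0, ← Real.rpow_natCast, Nat.cast_sub ht]
          ring_nf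
      _ ≤ β ^ ((t : ℝ) - 2 * L) * β ^ (1 : ℝ) := mul_le_mul_of_nonneg_left
          (Real.rpow_le_rpow_of_exponent_ge hβ0 hβ1.le (by linarith)) (by positivity)
      _ = β * β ^ ((t : ℝ) - 2 * L) := by rw [Real.rpow_one, mul_comm]
  have hrate : 0 ≤ β ^ ((t : ℝ) - 2 * L) := by positivity
  calc 4 * ((t : ℝ) + 2) ^ 2 * β ^ (t - 1) ≤ 36 * (t : ℝ) ^ 2 * (β * β ^ ((t : ℝ) - 2 * L)) :=
        mul_le_mul (by nlinarith) hpow (by positivity) (by positivity)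
    _ ≤ 9 * (t : ℝ) ^ 2 * (16 * β) * β ^ ((t : ℝ) - 2 * L) := by
        nlinarith [mul_nonneg (mul_nonneg (sq_nonneg (t : ℝ)) hβ0.le) hrate]
    _ ≤ _ := by gcongr

theorem deltaEx_succ_add_deltaEx_le {n d m : ℕ} (A : Matrix (Fin n) (Fin d) ℝ) (b : Fin d → ℝ)
    {Λ : Matrix (Fin d) (Fin d) ℝ} (hΛ : Λ.PosDef) {ν : ℝ} (hν : 0 < ν)
    (S : Matrix (Fin m) (Fin n) ℝ) {r s : ℝ} (hr : r < 1) (hs : 0 ≤ s) (hrs : r ^ 2 + s ^ 2 = 1)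
    (hS : matSpectralNorm (CSmat A ν Λ S - 1) ≤ r) {step : ℝ} (hstep : step = 2 * s ^ 2 / (1 + s))
    {x : ℕ → Fin d → ℝ}
    (hx : ∀ t : ℕ, 1 ≤ t → x (t + 1) = x t - step • (HSmat A ν Λ S)⁻¹ *ᵥ gradf A ν Λ b (x t)
      + ((1 - s) / (1 + s)) • (x t - x (t - 1)))
    {t : ℕ} (ht : 1 ≤ t) :
    deltaEx A ν Λ b (x (t + 1)) + deltaEx A ν Λ b (x t)
      ≤ 4 * ((t : ℝ) + 2) ^ 2 * ((1 - s) / (1 + s)) ^ (t - 1)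
        * (deltaEx A ν Λ b (x 1) + deltaEx A ν Λ b (x 0)) := by
  have hHS : (HSmat A ν Λ S).PosDef := by rw [HSmat_eq_Hmat]; exact Hmat_posDef (S * A) hν hΛ
  set H := Hmat A ν Λ
  set HS := HSmat A ν Λ S
  have hH : H.PosDef := Hmat_posDef A hν hΛ
  set Q := msqrt H
  have hQQ : Q * Q = H := msqrt_mul_self hH.posSemidef
  have hQ : Q.IsHermitian := msqrt_isHermitian hH.posSemidef
  have hQdet : IsUnit Q.det :=
    (isUnit_iff_isUnit_det Q).1 (isUnit_of_mul_isUnit_left (hQQ ▸ hH.isUnit))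
  have hCN : CSmat A ν Λ S * (Q * HS⁻¹ * Q) = 1 := by
    change Q⁻¹ * HS * Q⁻¹ * (Q * HS⁻¹ * Q) = 1
    simp only [Matrix.mul_assoc, nonsing_inv_mul_cancel_left _ _ hQdet,
      mul_nonsing_inv_cancel_left _ _ ((isUnit_iff_isUnit_det HS).1 hHS.isUnit),
      nonsing_inv_mul _ hQdet]
  have hN : (Q * HS⁻¹ * Q).IsHermitian := by
    simpa only [hQ.eq] using isHermitian_mul_mul_conjTranspose Q hHS.isHermitian.inv
  have hxs : H *ᵥ xstar A ν Λ b = b := by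
    rw [xstar, mulVec_mulVec, mul_nonsing_inv _ ((isUnit_iff_isUnit_det H).1 hH.isUnit),
      one_mulVec]
  have hdelta : ∀ j, deltaEx A ν Λ b (x j)
      = 1 / 2 * ‖WithLp.toLp 2 (Q *ᵥ (x j - xstar A ν Λ b))‖ ^ 2 := fun j => by
    change 1 / 2 * ((x j - xstar A ν Λ b) ⬝ᵥ H *ᵥ (x j - xstar A ν Λ b)) = _
    rw [← hQQ, dotProduct_mul_self_mulVec hQ]
  have hy : ∀ j, Q *ᵥ (x (j + 2) - xstar A ν Λ b)
      = ((1 + (1 - s) / (1 + s)) • (1 : Matrix (Fin d) (Fin d) ℝ) - (2 * s ^ 2 / (1 + s))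
        • (Q * HS⁻¹ * Q)) *ᵥ (Q *ᵥ (x (j + 1) - xstar A ν Λ b))
        - ((1 - s) / (1 + s)) • Q *ᵥ (x j - xstar A ν Λ b) := fun j => by
    subst hstep
    exact mulVec_sub_of_heavyBall hQQ hxs (hx (j + 1) (Nat.le_add_left 1 j))
  have hbound := norm_sq_add_norm_sq_le_of_heavyBall
    (y := fun j => Q *ᵥ (x j - xstar A ν Λ b)) hCN hN hr hs hrs hS hy ht
  simp only [hdelta]
  linarith

theorem stmt18_general {n d m : ℕ}
    (A : Matrix (Fin n) (Fin d) ℝ) (b : Fin d → ℝ)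
    (Λ : Matrix (Fin d) (Fin d) ℝ)
    (hΛ : (Λ - 1).PosSemidef) (ν : ℝ) (hν : 0 < ν)
    (ρ : ℝ) (hρ : ρ ∈ Set.Ioo (0 : ℝ) 1)
    (S : Matrix (Fin m) (Fin n) ℝ)
    (hS : matSpectralNorm (CSmat A ν Λ S - 1) ≤ Real.sqrt ρ)
    (x : ℕ → Fin d → ℝ)
    (hx : ∀ t : ℕ, 1 ≤ t → x (t + 1) =
      x t - (2 * (1 - ρ) / (1 + Real.sqrt (1 - ρ))) •
          (HSmat A ν Λ S)⁻¹.mulVec (gradf A ν Λ b (x t))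
        + ((1 - Real.sqrt (1 - ρ)) / (1 + Real.sqrt (1 - ρ))) • (x t - x (t - 1)))
    (h0 : 0 < deltaEx A ν Λ b (x 1) + deltaEx A ν Λ b (x 0)) :
    ∀ t : ℕ, 1 ≤ t →
      (deltaEx A ν Λ b (x (t + 1)) + deltaEx A ν Λ b (x t)) /
          (deltaEx A ν Λ b (x 1) + deltaEx A ν Λ b (x 0)) ≤
        ((3 : ℝ) ^ ((Real.log t / Real.log 2 + 1) * (Real.log t / Real.log 2 + 1 + 1)) *
            (1 + 4 * ((1 - Real.sqrt (1 - ρ)) / (1 + Real.sqrt (1 - ρ)))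
              + ((1 - Real.sqrt (1 - ρ)) / (1 + Real.sqrt (1 - ρ))) ^ 2)
              ^ (2 * (Real.log t / Real.log 2 + 1))) *
          ((1 - Real.sqrt (1 - ρ)) / (1 + Real.sqrt (1 - ρ)))
            ^ ((t : ℝ) - 2 * (Real.log t / Real.log 2 + 1)) := by
  intro t ht
  obtain ⟨hρ0, hρ1⟩ := hρ
  have hr1 : √ρ < 1 := (Real.sqrt_lt' one_pos).2 (by linarith)
  have hs0 : 0 < √(1 - ρ) := Real.sqrt_pos.2 (by linarith)
  have hs1 : √(1 - ρ) < 1 := (Real.sqrt_lt' one_pos).2 (by linarith)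
  have hrs : √ρ ^ 2 + √(1 - ρ) ^ 2 = 1 := by
    rw [Real.sq_sqrt hρ0.le, Real.sq_sqrt (by linarith)]
    ring
  have hβ0 : 0 < (1 - √(1 - ρ)) / (1 + √(1 - ρ)) := div_pos (by linarith) (by linarith)
  have hβ1 : (1 - √(1 - ρ)) / (1 + √(1 - ρ)) < 1 := (div_lt_one (by linarith)).2 (by linarith)
  have hL : 1 ≤ Real.log t / Real.log 2 + 1 := by
    have := div_nonneg (Real.log_nonneg (Nat.one_le_cast.2 ht)) (Real.log_nonneg one_le_two)
    linarith
  have htL : (t : ℝ) ≤ 2 ^ (Real.log t / Real.log 2 + 1 - 1) := by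
    rw [add_sub_cancel_right, ← Real.logb,
      Real.rpow_logb two_pos (by norm_num) (Nat.cast_pos.2 ht)]
  rw [div_le_iff₀ h0]
  calc deltaEx A ν Λ b (x (t + 1)) + deltaEx A ν Λ b (x t)
      ≤ 4 * ((t : ℝ) + 2) ^ 2 * ((1 - √(1 - ρ)) / (1 + √(1 - ρ))) ^ (t - 1)
        * (deltaEx A ν Λ b (x 1) + deltaEx A ν Λ b (x 0)) :=
        deltaEx_succ_add_deltaEx_le A b (posDef_of_posSemidef_sub_one hΛ) hν S hr1 hs0.le hrs hS
          (by rw [Real.sq_sqrt (by linarith)]) hx ht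
    _ ≤ _ := mul_le_mul_of_nonneg_right (mul_sq_mul_pow_le_rate hβ0 hβ1 hL ht htL) h0.le

/-- Finite-time guarantee for the heavy-ball (Polyak-IHS) iteration:
if `‖C_S - I‖₂ ≤ √ρ` with `ρ ∈ (0,1)`, with `μ_ρ = 2(1-ρ)/(1+√(1-ρ))` and
`β_ρ = (1-√(1-ρ))/(1+√(1-ρ))`, then for every `t ≥ 1`,
`(δ_{x_{t+1}} + δ_{x_t})/(δ_{x_1} + δ_{x_0}) ≤ α(t,ρ) · β_ρ^{ω(t)}`. -/
theorem stmt18 {n d m : ℕ} (hd : 1 ≤ d) (hdn : d ≤ n)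
    (A : Matrix (Fin n) (Fin d) ℝ) (b : Fin d → ℝ)
    (Λ : Matrix (Fin d) (Fin d) ℝ) (hΛdiag : Λ.IsDiag)
    (hΛ : (Λ - 1).PosSemidef) (ν : ℝ) (hν : 0 < ν)
    (ρ : ℝ) (hρ : ρ ∈ Set.Ioo (0 : ℝ) 1)
    (S : Matrix (Fin m) (Fin n) ℝ)
    (hS : matSpectralNorm (CSmat A ν Λ S - 1) ≤ Real.sqrt ρ)
    (x : ℕ → Fin d → ℝ)
    (hx : ∀ t : ℕ, 1 ≤ t → x (t + 1) =
      x t - (2 * (1 - ρ) / (1 + Real.sqrt (1 - ρ))) •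
          (HSmat A ν Λ S)⁻¹.mulVec (gradf A ν Λ b (x t))
        + ((1 - Real.sqrt (1 - ρ)) / (1 + Real.sqrt (1 - ρ))) • (x t - x (t - 1)))
    (h0 : 0 < deltaEx A ν Λ b (x 1) + deltaEx A ν Λ b (x 0)) :
    ∀ t : ℕ, 1 ≤ t →
      (deltaEx A ν Λ b (x (t + 1)) + deltaEx A ν Λ b (x t)) /
          (deltaEx A ν Λ b (x 1) + deltaEx A ν Λ b (x 0)) ≤
        ((3 : ℝ) ^ ((Real.log t / Real.log 2 + 1) * (Real.log t / Real.log 2 + 1 + 1)) *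
            (1 + 4 * ((1 - Real.sqrt (1 - ρ)) / (1 + Real.sqrt (1 - ρ)))
              + ((1 - Real.sqrt (1 - ρ)) / (1 + Real.sqrt (1 - ρ))) ^ 2)
              ^ (2 * (Real.log t / Real.log 2 + 1))) *
          ((1 - Real.sqrt (1 - ρ)) / (1 + Real.sqrt (1 - ρ)))
            ^ ((t : ℝ) - 2 * (Real.log t / Real.log 2 + 1)) :=
  stmt18_general A b Λ hΛ ν hν ρ hρ S hS x hx h0
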